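/- Let Λ be a finitely aligned P-graph and λ ∈ Λ. If U is a filter with r(U) = s(λ), then λ·U := ⋃_{μ∈U}{α : α ⪯ λμ} is a filter; and if V is a filter with λ ∈ V, then λ*·V := {μ : λμ ∈ V} is a filter. -/

import Mathlib

universe u

/-- A quasi-lattice ordered group in the sense of Nica: a (discrete) group `G` together
with a subsemigroup `P` containing the identity with `P ∩ P⁻¹ = {1}`, such that under the
partial order `p ≤ q ↔ p⁻¹ * q ∈ P`, any pair of elements of `G` with a common upper bound
in `P` has a least common upper bound in `P`. -/
structure QLOGroup (G : Type u) [Group G] where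
  P : Set G
  one_mem : (1 : G) ∈ P
  mul_mem : ∀ {p q : G}, p ∈ P → q ∈ P → p * q ∈ P
  eq_one_of_mem_inv_mem : ∀ p : G, p ∈ P → p⁻¹ ∈ P → p = 1
  lub_exists : ∀ p q : G, (∃ r ∈ P, p⁻¹ * r ∈ P ∧ q⁻¹ * r ∈ P) →
    ∃ r ∈ P, p⁻¹ * r ∈ P ∧ q⁻¹ * r ∈ P ∧
      ∀ s ∈ P, p⁻¹ * s ∈ P → q⁻¹ * s ∈ P → r⁻¹ * s ∈ P

namespace QLOGroup

variable {G : Type u} [Group G]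

/-- The left-invariant partial order on `G` induced by `P`. -/
def le (Q : QLOGroup G) (p q : G) : Prop := p⁻¹ * q ∈ Q.P

/-- `s` is the least common upper bound in `P` of `p` and `q` (i.e. `s = p ∨ q < ∞`). -/
def IsLub (Q : QLOGroup G) (p q s : G) : Prop :=
  s ∈ Q.P ∧ Q.le p s ∧ Q.le q s ∧ ∀ t ∈ Q.P, Q.le p t → Q.le q t → Q.le s t

/-- `s` is the least upper bound in `P` of the set `A` (i.e. `s = ∨A < ∞`). -/
def IsLubSet (Q : QLOGroup G) (A : Set G) (s : G) : Prop :=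
  s ∈ Q.P ∧ (∀ a ∈ A, Q.le a s) ∧ ∀ t ∈ Q.P, (∀ a ∈ A, Q.le a t) → Q.le s t

/-- `p` and `q` have a common upper bound in `P` (i.e. `p ∨ q < ∞`). -/
def HasLub (Q : QLOGroup G) (p q : G) : Prop := ∃ s, Q.IsLub p q s

/-- A subset `F` is `∨`-closed if whenever `p, q ∈ F` have `p ∨ q < ∞`, then `p ∨ q ∈ F`. -/
def VeeClosed (Q : QLOGroup G) (F : Set G) : Prop :=
  ∀ p ∈ F, ∀ q ∈ F, ∀ s, Q.IsLub p q s → s ∈ F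

/-- `F̄ = {∨A : A ⊆ F, A ≠ ∅, ∨A ≠ ∞}`. -/
def veeClosure (Q : QLOGroup G) (F : Set G) : Set G :=
  {s | ∃ A ⊆ F, A.Nonempty ∧ Q.IsLubSet A s}

end QLOGroup

/-- A `P`-graph for a quasi-lattice ordered group `(G,P)`: a countable category with a
degree functor `d` into `P` satisfying the unique factorisation property.  Composition is
written in the path order of Raeburn-Sims: `comp μ ν` is defined when `s(μ) = r(ν)` (with
`src = s = dom` and `tgt = r = cod`), and `comp` is a total function whose axioms are only
imposed on composable pairs. -/
structure PGraph {G : Type u} [Group G] (Q : QLOGroup G) where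
  Obj : Type
  Mor : Type
  countable_mor : Countable Mor
  src : Mor → Obj
  tgt : Mor → Obj
  ident : Obj → Mor
  comp : Mor → Mor → Mor
  src_ident : ∀ v, src (ident v) = v
  tgt_ident : ∀ v, tgt (ident v) = v
  src_comp : ∀ μ ν, src μ = tgt ν → src (comp μ ν) = src ν
  tgt_comp : ∀ μ ν, src μ = tgt ν → tgt (comp μ ν) = tgt μ
  id_comp : ∀ μ, comp (ident (tgt μ)) μ = μ
  comp_id : ∀ μ, comp μ (ident (src μ)) = μ
  comp_assoc : ∀ μ ν ρ, src μ = tgt ν → src ν = tgt ρ →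
    comp (comp μ ν) ρ = comp μ (comp ν ρ)
  d : Mor → G
  d_mem : ∀ μ, d μ ∈ Q.P
  d_ident : ∀ v, d (ident v) = 1
  d_comp : ∀ μ ν, src μ = tgt ν → d (comp μ ν) = d μ * d ν
  factorisation : ∀ (lam : Mor) (p q : G), p ∈ Q.P → q ∈ Q.P → d lam = p * q →
    ∃! mn : Mor × Mor, src mn.1 = tgt mn.2 ∧ lam = comp mn.1 mn.2 ∧ d mn.1 = p ∧ d mn.2 = q

namespace PGraph

variable {G : Type u} [Group G] {Q : QLOGroup G} (Λ : PGraph Q)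

/-- The prefix order: `λ ⪯ μ` iff `μ = λμ'` for some `μ'`. -/
def PrefixLe (lam mu : Λ.Mor) : Prop :=
  ∃ tail, Λ.src lam = Λ.tgt tail ∧ mu = Λ.comp lam tail

/-- The set of minimal common extensions of `μ` and `ν`. -/
def MCE (mu nu : Λ.Mor) : Set Λ.Mor :=
  {lam | Λ.PrefixLe mu lam ∧ Λ.PrefixLe nu lam ∧ Q.IsLub (Λ.d mu) (Λ.d nu) (Λ.d lam)}

/-- `Λ` is finitely aligned if all the sets `MCE(μ,ν)` are finite. -/
def FinitelyAligned : Prop := ∀ mu nu : Λ.Mor, (Λ.MCE mu nu).Finite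

/-- A filter of `Λ`: a nonempty subset that is downward closed (F1) and upward
directed (F2) for the prefix order. -/
def IsGraphFilter (U : Set Λ.Mor) : Prop :=
  U.Nonempty ∧ (∀ mu ∈ U, ∀ lam, Λ.PrefixLe lam mu → lam ∈ U) ∧
    (∀ mu ∈ U, ∀ nu ∈ U, ∃ lam ∈ U, Λ.PrefixLe mu lam ∧ Λ.PrefixLe nu lam)

/-- An ultrafilter of `Λ`: a filter maximal under inclusion. -/
def IsGraphUltrafilter (U : Set Λ.Mor) : Prop :=
  Λ.IsGraphFilter U ∧ ∀ V, Λ.IsGraphFilter V → U ⊆ V → U = V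

/-- `λ·U = ⋃_{μ ∈ U} {α : α ⪯ λμ}`. -/
def actFwd (lam : Λ.Mor) (U : Set Λ.Mor) : Set Λ.Mor :=
  {a | ∃ mu ∈ U, Λ.PrefixLe a (Λ.comp lam mu)}

/-- `λ*·V = {μ : λμ ∈ V}`. -/
def actBwd (lam : Λ.Mor) (V : Set Λ.Mor) : Set Λ.Mor :=
  {mu | Λ.src lam = Λ.tgt mu ∧ Λ.comp lam mu ∈ V}

/-- `(μ,ν)` is a balanced pair: `s(μ) = s(ν)` and `d(μ) = d(ν)`. -/
def Balanced (mu nu : Λ.Mor) : Prop := Λ.src mu = Λ.src nu ∧ Λ.d mu = Λ.d nu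

/-- The pairs `(α,β)` with `να = ξβ ∈ MCE(ν,ξ)`. -/
def MCEpairs (nu xi : Λ.Mor) : Set (Λ.Mor × Λ.Mor) :=
  {p | Λ.src nu = Λ.tgt p.1 ∧ Λ.src xi = Λ.tgt p.2 ∧
    Λ.comp nu p.1 = Λ.comp xi p.2 ∧ Λ.comp nu p.1 ∈ Λ.MCE nu xi}

end PGraph

/-!
Both statements are pure bookkeeping with the category axioms. Left composition by `λ` is
monotone for `⪯`, which transports (F1) and (F2) from `U` to `λ·U`; every element of `U` has
range `s(λ)` because `U` is directed and contains `s(λ)`. For `λ*·V`, a common extension in `V`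
of `λμ` and `λν` factors as `λ(μα) = λ(νβ)`, and unique factorisation lets us cancel `λ`.
-/

namespace PGraph

variable {G : Type u} [Group G] {Q : QLOGroup G} (Λ : PGraph Q)

lemma prefixLe_refl (a : Λ.Mor) : Λ.PrefixLe a a :=
  ⟨Λ.ident (Λ.src a), (Λ.tgt_ident _).symm, (Λ.comp_id a).symm⟩

lemma prefixLe_trans {a b c : Λ.Mor} (hab : Λ.PrefixLe a b) (hbc : Λ.PrefixLe b c) :
    Λ.PrefixLe a c := by
  obtain ⟨t, ht, rfl⟩ := hab
  obtain ⟨t', ht', rfl⟩ := hbc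
  have hst : Λ.src t = Λ.tgt t' := by rwa [Λ.src_comp a t ht] at ht'
  exact ⟨Λ.comp t t', by rw [ht, Λ.tgt_comp t t' hst], Λ.comp_assoc a t t' ht hst⟩

lemma ident_tgt_prefixLe (a : Λ.Mor) : Λ.PrefixLe (Λ.ident (Λ.tgt a)) a :=
  ⟨a, Λ.src_ident _, (Λ.id_comp a).symm⟩

lemma tgt_eq_of_prefixLe {a b : Λ.Mor} (h : Λ.PrefixLe a b) : Λ.tgt b = Λ.tgt a := by
  obtain ⟨t, ht, rfl⟩ := h
  exact Λ.tgt_comp a t ht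

lemma comp_prefixLe_comp {a b : Λ.Mor} (lam : Λ.Mor) (hc : Λ.src lam = Λ.tgt a)
    (h : Λ.PrefixLe a b) : Λ.PrefixLe (Λ.comp lam a) (Λ.comp lam b) := by
  obtain ⟨t, ht, rfl⟩ := h
  exact ⟨t, by rwa [Λ.src_comp lam a hc], (Λ.comp_assoc lam a t hc ht).symm⟩

lemma comp_left_cancel {lam a b : Λ.Mor} (ha : Λ.src lam = Λ.tgt a)
    (hb : Λ.src lam = Λ.tgt b) (h : Λ.comp lam a = Λ.comp lam b) : a = b := by
  have hd : Λ.d b = Λ.d a :=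
    mul_left_cancel (by rw [← Λ.d_comp _ _ hb, ← Λ.d_comp _ _ ha, h])
  obtain ⟨_, _, huniq⟩ := Λ.factorisation (Λ.comp lam a) (Λ.d lam) (Λ.d a)
    (Λ.d_mem lam) (Λ.d_mem a) (Λ.d_comp _ _ ha)
  have hfa : ((lam, a) : Λ.Mor × Λ.Mor) = _ := huniq _ ⟨ha, rfl, rfl, rfl⟩
  have hfb : ((lam, b) : Λ.Mor × Λ.Mor) = _ := huniq _ ⟨hb, h, rfl, hd⟩
  exact congrArg Prod.snd (hfa.trans hfb.symm)

lemma tgt_eq_of_mem_of_ident_mem {U : Set Λ.Mor} (hU : Λ.IsGraphFilter U) {v : Λ.Obj}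
    (hv : Λ.ident v ∈ U) {mu : Λ.Mor} (hmu : mu ∈ U) : Λ.tgt mu = v := by
  obtain ⟨_, hdown, hdir⟩ := hU
  obtain ⟨c, -, hmc, hvc⟩ :=
    hdir _ (hdown mu hmu _ (Λ.ident_tgt_prefixLe mu)) _ hv
  rw [← Λ.tgt_ident (Λ.tgt mu), ← Λ.tgt_eq_of_prefixLe hmc, Λ.tgt_eq_of_prefixLe hvc,
    Λ.tgt_ident]

theorem isGraphFilter_actFwd {lam : Λ.Mor} {U : Set Λ.Mor} (hU : Λ.IsGraphFilter U)
    (hid : Λ.ident (Λ.src lam) ∈ U) : Λ.IsGraphFilter (Λ.actFwd lam U) := by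
  have hcomposable : ∀ mu ∈ U, Λ.src lam = Λ.tgt mu := fun mu hmu =>
    (Λ.tgt_eq_of_mem_of_ident_mem hU hid hmu).symm
  obtain ⟨_, -, hdir⟩ := hU
  refine ⟨⟨lam, _, hid, by rw [Λ.comp_id]; exact Λ.prefixLe_refl lam⟩, ?_, ?_⟩
  · rintro mu ⟨nu, hnu, hmu⟩ a ha
    exact ⟨nu, hnu, Λ.prefixLe_trans ha hmu⟩
  · rintro a ⟨mu, hmu, ha⟩ b ⟨nu, hnu, hb⟩
    obtain ⟨rho, hrho, hmr, hnr⟩ := hdir mu hmu nu hnu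
    exact ⟨Λ.comp lam rho, ⟨rho, hrho, Λ.prefixLe_refl _⟩,
      Λ.prefixLe_trans ha (Λ.comp_prefixLe_comp lam (hcomposable mu hmu) hmr),
      Λ.prefixLe_trans hb (Λ.comp_prefixLe_comp lam (hcomposable nu hnu) hnr)⟩

lemma exists_eq_comp_comp_of_comp_prefixLe {lam mu rho : Λ.Mor}
    (hc : Λ.src lam = Λ.tgt mu) (h : Λ.PrefixLe (Λ.comp lam mu) rho) :
    ∃ t, Λ.src mu = Λ.tgt t ∧ Λ.src lam = Λ.tgt (Λ.comp mu t) ∧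
      rho = Λ.comp lam (Λ.comp mu t) := by
  obtain ⟨t, ht, rfl⟩ := h
  rw [Λ.src_comp lam mu hc] at ht
  exact ⟨t, ht, by rwa [Λ.tgt_comp mu t ht], Λ.comp_assoc lam mu t hc ht⟩

theorem isGraphFilter_actBwd {lam : Λ.Mor} {V : Set Λ.Mor} (hV : Λ.IsGraphFilter V)
    (hlam : lam ∈ V) : Λ.IsGraphFilter (Λ.actBwd lam V) := by
  obtain ⟨_, hdown, hdir⟩ := hV
  refine ⟨⟨Λ.ident (Λ.src lam), (Λ.tgt_ident _).symm, by rwa [Λ.comp_id]⟩, ?_, ?_⟩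
  · rintro mu ⟨hc, hmem⟩ nu hnu
    have hcn : Λ.src lam = Λ.tgt nu := by rw [hc, Λ.tgt_eq_of_prefixLe hnu]
    exact ⟨hcn, hdown _ hmem _ (Λ.comp_prefixLe_comp lam hcn hnu)⟩
  · rintro mu ⟨hcm, hm⟩ nu ⟨hcn, hn⟩
    obtain ⟨rho, hrho, hmr, hnr⟩ := hdir _ hm _ hn
    obtain ⟨t, ht, hcmt, rfl⟩ := Λ.exists_eq_comp_comp_of_comp_prefixLe hcm hmr
    obtain ⟨t', ht', hcnt, heq⟩ := Λ.exists_eq_comp_comp_of_comp_prefixLe hcn hnr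
    exact ⟨Λ.comp mu t, ⟨hcmt, hrho⟩, ⟨t, ht, rfl⟩,
      ⟨t', ht', Λ.comp_left_cancel hcmt hcnt heq⟩⟩

end PGraph

theorem stmt6_general {G : Type u} [Group G] {Q : QLOGroup G} (Λ : PGraph Q)
    (lam : Λ.Mor) :
    (∀ U : Set Λ.Mor, Λ.IsGraphFilter U → Λ.ident (Λ.src lam) ∈ U →
      Λ.IsGraphFilter (Λ.actFwd lam U)) ∧
    (∀ V : Set Λ.Mor, Λ.IsGraphFilter V → lam ∈ V →
      Λ.IsGraphFilter (Λ.actBwd lam V)) :=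
  ⟨fun _ hU hid => Λ.isGraphFilter_actFwd hU hid,
    fun _ hV hlam => Λ.isGraphFilter_actBwd hV hlam⟩

/-- If `U` is a filter with `r(U) = s(λ)` then `λ·U` is a filter, and if `V`
is a filter containing `λ` then `λ*·V` is a filter. -/
theorem stmt6 {G : Type u} [Group G] {Q : QLOGroup G} (Λ : PGraph Q)
    (hFA : Λ.FinitelyAligned) (lam : Λ.Mor) :
    (∀ U : Set Λ.Mor, Λ.IsGraphFilter U → Λ.ident (Λ.src lam) ∈ U →
      Λ.IsGraphFilter (Λ.actFwd lam U)) ∧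
    (∀ V : Set Λ.Mor, Λ.IsGraphFilter V → lam ∈ V →
      Λ.IsGraphFilter (Λ.actBwd lam V)) :=
  stmt6_general Λ lam
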